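/- arXiv:0903.1318 — 3 statements merged into one kernel-verified Lean document; each statement's English description precedes it below -/
import Mathlib

section
/- Every finitely generated subgroup G of GL(n, K), where K is a field of characteristic zero, such that G is contained in a finite union of conjugacy classes of finite-order elements of GL(n, K), is finite. -/
/-!
Let `m` be the product of the orders of the elements of `C`. Every `g ∈ G` is conjugate to an
element of `C`, so `g ^ m = 1` and `tr g` takes only finitely many values. This already forces `G`
to be finite (Burnside): pick `b₁, …, b_d ∈ G` spanning the linear span of `G`; the map
`g ↦ (tr (g bᵢ))ᵢ` has finite image, and it is injective because `tr (g h⁻¹) = n` and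
`(g h⁻¹) ^ m = 1` force `g h⁻¹ = 1`. Indeed the eigenvalues of such a matrix are `n` roots of
unity with sum `n`; seen in `ℂ` they have absolute value `1`, hence all equal `1`, and a matrix
whose minimal polynomial is separable with `1` as its only root is the identity.
-/

open Polynomial

open scoped ComplexOrder in
theorem Complex.eq_one_of_pow_eq_one_of_sum_eq_card {m : ℕ} (hm : m ≠ 0) {t : Multiset ℂ}
    (hpow : ∀ z ∈ t, z ^ m = 1) (hsum : t.sum = Multiset.card t) : ∀ z ∈ t, z = 1 := by
  have hnorm : ∀ z ∈ t, ‖z‖ = 1 := fun z hz => norm_eq_one_of_pow_eq_one (hpow z hz) hm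
  have hre : ∀ z ∈ t, z.re = 1 := by
    by_contra! ⟨z, hz, hne⟩
    have hlt : (t.map re).sum < (t.map fun _ => (1 : ℝ)).sum :=
      Multiset.sum_lt_sum (fun w hw => (re_le_norm w).trans (hnorm w hw).le)
        ⟨z, hz, ((re_le_norm z).trans (hnorm z hz).le).lt_of_ne hne⟩
    have hresum : (t.map re).sum = Multiset.card t := by
      simpa [hsum] using (map_multiset_sum reAddGroupHom t).symm
    simp [hresum] at hlt
  intro z hz
  have hnonneg : 0 ≤ z := re_eq_norm.mp ((hre z hz).trans (hnorm z hz).symm)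
  exact ext (hre z hz) (nonneg_iff.mp hnonneg).2.symm

theorem eq_one_of_pow_eq_one_of_sum_eq_card {L : Type*} [Field L] [CharZero L] {m : ℕ}
    (hm : m ≠ 0) {t : Multiset L} (hpow : ∀ z ∈ t, z ^ m = 1)
    (hsum : t.sum = Multiset.card t) : ∀ z ∈ t, z = 1 := by
  have hint : ∀ z ∈ t, z ∈ algebraicClosure ℚ L := fun z hz =>
    ⟨X ^ m - 1, monic_X_pow_sub_C 1 hm, by simp [hpow z hz]⟩
  lift t to Multiset (algebraicClosure ℚ L) using hint
  rw [Multiset.forall_mem_map_iff] at hpow ⊢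
  replace hpow : ∀ a ∈ t, a ^ m = 1 := fun a ha =>
    Subtype.val_injective (by simpa using hpow a ha)
  replace hsum : t.sum = Multiset.card t := Subtype.val_injective (by simpa using hsum)
  -- The ascription makes this use the `ℚ`-algebra structure that `IsAlgClosed.lift` looks for.
  have : Algebra.IsAlgebraic ℚ (algebraicClosure ℚ L) := algebraicClosure.isAlgebraic ℚ L
  let φ : algebraicClosure ℚ L →ₐ[ℚ] ℂ := IsAlgClosed.lift
  have hφ := Complex.eq_one_of_pow_eq_one_of_sum_eq_card hm (t := t.map φ)
    (Multiset.forall_mem_map_iff.mpr fun a ha => by rw [← map_pow, hpow a ha, map_one])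
    (by rw [← map_multiset_sum, hsum]; simp)
  intro a ha
  exact congrArg Subtype.val <| φ.toRingHom.injective <|
    (hφ (φ a) (Multiset.mem_map_of_mem φ ha)).trans (map_one φ).symm

namespace Matrix

variable {ι : Type*} [Fintype ι] [DecidableEq ι]

theorem charpoly_eq_X_sub_one_pow_of_pow_eq_one_of_trace_eq_card {L : Type*} [Field L]
    [IsAlgClosed L] [CharZero L] {m : ℕ} (hm : m ≠ 0) {N : Matrix ι ι L} (hpow : N ^ m = 1)
    (htr : N.trace = Fintype.card ι) : N.charpoly = (X - C 1) ^ Fintype.card ι := by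
  cases isEmpty_or_nonempty ι
  · simp
  have hcard : Multiset.card N.charpoly.roots = Fintype.card ι := by
    rw [IsAlgClosed.card_roots_eq_natDegree, charpoly_natDegree_eq_dim]
  have hroots : ∀ z ∈ N.charpoly.roots, z ^ m = 1 := by
    intro z hz
    have hz' : z ∈ spectrum L N :=
      mem_spectrum_iff_isRoot_charpoly.mpr (isRoot_of_mem_roots hz)
    simpa [hpow, spectrum.one_eq] using spectrum.pow_mem_pow N m hz'
  have hone := eq_one_of_pow_eq_one_of_sum_eq_card hm hroots
    (by rw [← trace_eq_sum_roots_charpoly, htr, hcard])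
  rw [(IsAlgClosed.splits N.charpoly).eq_prod_roots_of_monic N.charpoly_monic,
    Multiset.eq_replicate.mpr ⟨hcard, hone⟩]
  simp

theorem eq_one_of_pow_eq_one_of_trace_eq_card_of_isAlgClosed {L : Type*} [Field L]
    [IsAlgClosed L] [CharZero L] {m : ℕ} (hm : m ≠ 0) {N : Matrix ι ι L} (hpow : N ^ m = 1)
    (htr : N.trace = Fintype.card ι) : N = 1 := by
  cases isEmpty_or_nonempty ι
  · exact Subsingleton.elim _ _
  -- `minpoly N` divides the separable `X ^ m - 1` and `charpoly N = (X - 1) ^ card ι`.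
  have hsq : Squarefree (minpoly L N) :=
    ((separable_X_pow_sub_C 1 (by exact_mod_cast hm) one_ne_zero).squarefree).squarefree_of_dvd
      (minpoly.dvd L N (by simp [hpow]))
  have hdvd : minpoly L N ∣ X - C 1 := by
    rw [← hsq.dvd_pow_iff_dvd (Fintype.card_ne_zero (α := ι)),
      ← charpoly_eq_X_sub_one_pow_of_pow_eq_one_of_trace_eq_card hm hpow htr]
    exact minpoly_dvd_charpoly N
  simpa [sub_eq_zero] using aeval_eq_zero_of_dvd_aeval_eq_zero hdvd (minpoly.aeval L N)

theorem eq_one_of_pow_eq_one_of_trace_eq_card {K : Type*} [Field K] [CharZero K] {m : ℕ}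
    (hm : m ≠ 0) {M : Matrix ι ι K} (hpow : M ^ m = 1) (htr : M.trace = Fintype.card ι) :
    M = 1 := by
  let f := algebraMap K (AlgebraicClosure K)
  have hN : M.map f = 1 := eq_one_of_pow_eq_one_of_trace_eq_card_of_isAlgClosed hm
    (by rw [← RingHom.mapMatrix_apply, ← map_pow, hpow, _root_.map_one])
    (by rw [← AddMonoidHom.map_trace, htr, map_natCast])
  exact map_injective f.injective (hN.trans (Matrix.map_one _ f.map_zero f.map_one).symm)

namespace GeneralLinearGroup

theorem trace_eq_of_isConj {R : Type*} [CommRing R] {A B : GL ι R} (h : IsConj A B) :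
    trace (A : Matrix ι ι R) = trace (B : Matrix ι ι R) := by
  obtain ⟨c, rfl⟩ := isConj_iff.mp h
  rw [Units.val_mul, Units.val_mul, trace_units_conj]

variable {K : Type*} [Field K] [CharZero K] {m : ℕ}

theorem eq_one_of_pow_eq_one_of_trace_eq_card (hm : m ≠ 0) {u : GL ι K}
    (hpow : u ^ m = 1) (htr : trace (u : Matrix ι ι K) = Fintype.card ι) : u = 1 :=
  Units.ext <| Matrix.eq_one_of_pow_eq_one_of_trace_eq_card hm
    (by rw [← Units.val_pow_eq_pow_val, hpow, Units.val_one]) htr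

theorem finite_of_pow_eq_one_of_finite_trace (G : Subgroup (GL ι K))
    (hm : m ≠ 0) (hexp : ∀ g ∈ G, g ^ m = 1)
    (htr : (Set.range fun g : G => trace ((g : GL ι K) : Matrix ι ι K)).Finite) : Finite G := by
  let v : G → Matrix ι ι K := fun g => (g : GL ι K)
  obtain ⟨f, hf, hspan, -⟩ := Submodule.exists_fun_fin_finrank_span_eq K (Set.range v)
  choose b hb using hf
  obtain rfl : f = v ∘ b := funext fun i => (hb i).symm
  have := htr.to_subtype
  refine Finite.of_injective (β := _ → Set.range fun g : G => trace (v g))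
    (fun g i => ⟨trace (v (g * b i)), g * b i, rfl⟩) fun g h hgh => ?_
  have heq : Set.EqOn ((traceLinearMap ι K K).comp (LinearMap.mulLeft K (v g)))
      ((traceLinearMap ι K K).comp (LinearMap.mulLeft K (v h)))
      (Submodule.span K (Set.range v)) := by
    rw [← hspan]
    refine LinearMap.eqOn_span' ?_
    rintro _ ⟨i, rfl⟩
    simpa [v] using congrArg Subtype.val (congrFun hgh i)
  refine mul_inv_eq_one.mp <| Subtype.ext <|
    eq_one_of_pow_eq_one_of_trace_eq_card hm (hexp _ (g * h⁻¹).2) ?_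
  simpa [v] using heq (Submodule.subset_span ⟨h⁻¹, rfl⟩)

end GeneralLinearGroup

end Matrix

open Matrix

theorem stmt_7_general (K : Type*) [Field K] [CharZero K] (n : ℕ)
    (G : Subgroup (GL (Fin n) K))
    (C : Finset (GL (Fin n) K)) (hord : ∀ A ∈ C, IsOfFinOrder A)
    (hcov : ∀ g ∈ G, ∃ A ∈ C, IsConj A g) :
    Finite G := by
  refine GeneralLinearGroup.finite_of_pow_eq_one_of_finite_trace G (m := ∏ A ∈ C, orderOf A)
    (Finset.prod_ne_zero_iff.mpr fun A hA => (hord A hA).orderOf_pos.ne') ?_ ?_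
  · intro g hg
    obtain ⟨A, hA, c, hc⟩ := hcov g hg
    rw [← orderOf_dvd_iff_pow_eq_one, ← hc.orderOf_eq]
    exact Finset.dvd_prod_of_mem _ hA
  · refine (C.finite_toSet.image fun A : GL (Fin n) K => trace A.val).subset ?_
    rintro _ ⟨g, rfl⟩
    obtain ⟨A, hA, hAg⟩ := hcov g g.2
    exact ⟨A, hA, GeneralLinearGroup.trace_eq_of_isConj hAg⟩

/-- A finitely generated subgroup of `GL(n, K)`, `char K = 0`, contained in
finitely many conjugacy classes of finite-order elements, is finite. -/
theorem stmt_7 (K : Type*) [Field K] [CharZero K] (n : ℕ)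
    (G : Subgroup (GL (Fin n) K)) (hfg : G.FG)
    (C : Finset (GL (Fin n) K)) (hord : ∀ A ∈ C, IsOfFinOrder A)
    (hcov : ∀ g ∈ G, ∃ A ∈ C, IsConj A g) :
    Finite G :=
  stmt_7_general K n G C hord hcov
end

section
/- Let G be a non-abelian finite p-group with center Z of order p^l. Then there exists an element g ∈ G \ Z with g^p ∈ Z and gZ central in G/Z, and the map h ↦ [h, g] = hgh^{-1}g^{-1} defines a group homomorphism from G to Z whose kernel K has order at least |G| / p^l and whose center contains the subgroup generated by Z and g. -/
/-!
Choose `g` whose image in `G ⧸ Z` is a central element of order `p`; it exists because the center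
of the nontrivial `p`-group `G ⧸ Z` is nontrivial. Then every commutator `⁅h, g⁆` is central, so
`⁅a * b, g⁆ = a ⁅b, g⁆ a⁻¹ ⁅a, g⁆ = ⁅a, g⁆ ⁅b, g⁆` and `h ↦ ⁅h, g⁆` is a homomorphism into `Z`.
Its kernel is the centralizer of `g`, of index `|range| ≤ |Z|`, and both `Z` and `g` centralize it.
-/

open Subgroup

open scoped commutatorElement

namespace Subgroup

variable {G : Type*} [Group G]

def commutatorHom (g : G) (hg : ∀ h : G, ⁅h, g⁆ ∈ center G) : G →* G :=
  MonoidHom.mk' (fun h => ⁅h, g⁆) fun a b => by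
    have hb : ∀ x : G, x * ⁅b, g⁆ = ⁅b, g⁆ * x := fun x => mem_center_iff.mp (hg b) x
    rw [commutatorElement_mul_left_eq_conj_mul, hb, mul_inv_cancel_right, hb]

@[simp]
theorem commutatorHom_apply (g : G) (hg : ∀ h : G, ⁅h, g⁆ ∈ center G) (h : G) :
    commutatorHom g hg h = ⁅h, g⁆ :=
  rfl

theorem range_commutatorHom_le_center (g : G) (hg : ∀ h : G, ⁅h, g⁆ ∈ center G) :
    (commutatorHom g hg).range ≤ center G := by
  rintro _ ⟨h, rfl⟩
  exact hg h

theorem ker_commutatorHom (g : G) (hg : ∀ h : G, ⁅h, g⁆ ∈ center G) :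
    (commutatorHom g hg).ker = centralizer {g} := by
  ext x
  rw [MonoidHom.mem_ker, commutatorHom_apply, mem_centralizer_iff_commutator_eq_one']
  simp

theorem center_sup_closure_le_centralizer_inf (g : G) :
    center G ⊔ closure {g} ≤ centralizer {g} ⊓ centralizer (centralizer {g} : Set G) := by
  refine sup_le (le_inf (center_le_centralizer _) (center_le_centralizer _)) ?_
  rw [closure_le, Set.singleton_subset_iff]
  exact ⟨mem_centralizer_singleton_iff.mpr rfl, fun h hh => mem_centralizer_singleton_iff.mp hh⟩

theorem card_le_card_ker_mul_card_of_range_le {H : Type*} [Group H] [Finite H] (f : G →* H)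
    {K : Subgroup H} (hK : f.range ≤ K) : Nat.card G ≤ Nat.card f.ker * Nat.card K := by
  rw [← card_mul_index f.ker, index_ker]
  exact Nat.mul_le_mul_left _ (card_le_of_le hK)

end Subgroup

theorem IsPGroup.exists_mem_center_orderOf_eq {p : ℕ} [Fact p.Prime] {G : Type*} [Group G]
    [Finite G] [Nontrivial G] (hG : IsPGroup p G) : ∃ z ∈ center G, orderOf z = p := by
  have : Nontrivial (center G) := hG.center_nontrivial
  obtain ⟨n, hn, hcard⟩ := (hG.to_subgroup (center G)).nontrivial_iff_card.mp this
  obtain ⟨z, hz⟩ := exists_prime_orderOf_dvd_card' (G := center G) p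
    (hcard ▸ dvd_pow_self p hn.ne')
  exact ⟨z, z.2, (orderOf_coe z).trans hz⟩

theorem IsPGroup.exists_notMem_center_commutator_mem_center {p : ℕ} [Fact p.Prime] {G : Type*}
    [Group G] [Finite G] (hG : IsPGroup p G) (hna : ¬ ∀ a b : G, a * b = b * a) :
    ∃ g : G, g ∉ center G ∧ g ^ p ∈ center G ∧ ∀ h : G, ⁅h, g⁆ ∈ center G := by
  have : Nontrivial (G ⧸ center G) := QuotientGroup.nontrivial_iff.mpr fun htop =>
    hna fun a b => mem_center_iff.mp (htop ▸ mem_top b) a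
  obtain ⟨z, hz, hzp⟩ := (hG.to_quotient (center G)).exists_mem_center_orderOf_eq
  obtain ⟨g, rfl⟩ := QuotientGroup.mk_surjective z
  refine ⟨g, fun hg => ?_, ?_, fun h => ?_⟩
  · rw [(QuotientGroup.eq_one_iff g).mpr hg, orderOf_one] at hzp
    exact (Fact.out : p.Prime).one_lt.ne hzp
  · rw [← QuotientGroup.eq_one_iff, QuotientGroup.mk_pow, ← hzp, pow_orderOf_eq_one]
  · rw [← QuotientGroup.eq_one_iff, ← QuotientGroup.mk'_apply, map_commutatorElement,
      commutatorElement_eq_one_iff_commute]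
    exact mem_center_iff.mp hz _

/-- In a non-abelian finite `p`-group `G` with center `Z` of order `p^l`, there is
`g ∉ Z` with `g^p ∈ Z` and `gZ` central in `G/Z`, such that `h ↦ [h,g] = hgh⁻¹g⁻¹`
is a homomorphism `G → Z` whose kernel `K` has order at least `|G|/p^l` and whose
center contains `⟨Z, g⟩`. -/
theorem stmt_10 (G : Type*) [Group G] [Finite G] (p l : ℕ) (hp : p.Prime)
    (hG : IsPGroup p G) (hna : ¬ ∀ a b : G, a * b = b * a)
    (hZ : Nat.card (Subgroup.center G) = p ^ l) :
    ∃ g : G, g ∉ Subgroup.center G ∧ g ^ p ∈ Subgroup.center G ∧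
      (∀ h : G, h * g * h⁻¹ * g⁻¹ ∈ Subgroup.center G) ∧
      ∃ φ : G →* G, (∀ h : G, φ h = h * g * h⁻¹ * g⁻¹) ∧
        Nat.card G ≤ Nat.card φ.ker * p ^ l ∧
        ∀ x ∈ Subgroup.center G ⊔ Subgroup.closure {g},
          x ∈ φ.ker ∧ ∀ h ∈ φ.ker, x * h = h * x := by
  have : Fact p.Prime := ⟨hp⟩
  obtain ⟨g, hgZ, hgp, hcomm⟩ := hG.exists_notMem_center_commutator_mem_center hna
  refine ⟨g, hgZ, hgp, hcomm, commutatorHom g hcomm, fun h => rfl, ?_, fun x hx => ?_⟩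
  · rw [← hZ]
    exact card_le_card_ker_mul_card_of_range_le _ (range_commutatorHom_le_center g hcomm)
  · rw [ker_commutatorHom]
    obtain ⟨hxg, hxc⟩ := mem_inf.mp (center_sup_closure_le_centralizer_inf g hx)
    exact ⟨hxg, fun h hh => (mem_centralizer_iff.mp hxc h hh).symm⟩
end

section
/- Let k be a field and d ≥ 1. For any nonzero homogeneous polynomial r(x, y) of degree d + 1 over k whose x^{d+1} coefficient and y^{d+1} coefficient are both nonzero, there exist homogeneous polynomials p, q of degree d with no common root in P^1 over the algebraic closure of k such that p(x,y)·y - q(x,y)·x = r(x,y). -/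
/-!
Let `c` be the `x^{d+1}`-coefficient of `r`. Every monomial of `r - c x^{d+1}` contains `y`, so
`r = y p + c x^{d+1}` with `p` a form of degree `d`; take `q = -c x^d`. A common zero of `p` and
`q` has `x = 0` since `c ≠ 0`, and there `r(0, y) = c' y^{d+1}` vanishes, where `c' ≠ 0` is the
`y^{d+1}`-coefficient, so `y = 0` as well.
-/

open MvPolynomial

theorem Finsupp.eq_single_degree_of_apply_eq_zero {i j : Fin 2} (hij : i ≠ j)
    {m : Fin 2 →₀ ℕ} (hm : m j = 0) : m = Finsupp.single i m.degree := by
  have hsupp : m.support ⊆ {i} := by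
    intro a ha
    rw [Finset.mem_singleton]
    have ha' : a ≠ j := fun h => Finsupp.mem_support_iff.mp ha (h ▸ hm)
    omega
  rw [Finsupp.eq_single_iff.mpr ⟨hsupp, rfl⟩, Finsupp.degree_single]

namespace MvPolynomial

section CommSemiring

variable {σ R : Type*} [CommSemiring R]

theorem X_dvd_of_forall_mem_support {p : MvPolynomial σ R} {i : σ}
    (h : ∀ m ∈ p.support, m i ≠ 0) : X i ∣ p := by
  rw [X_dvd_iff_modMonomial_eq_zero]
  ext m
  rw [coeff_zero]
  by_cases hm : Finsupp.single i 1 ≤ m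
  · exact coeff_modMonomial_of_le p hm
  · rw [coeff_modMonomial_of_not_le p hm, ← notMem_support_iff]
    exact fun hmem => hm (Finsupp.single_le_iff.mpr (Nat.one_le_iff_ne_zero.mpr (h m hmem)))

theorem IsHomogeneous.of_X_mul {p : MvPolynomial σ R} {i : σ} {n : ℕ}
    (h : (X i * p).IsHomogeneous (n + 1)) : p.IsHomogeneous n := by
  intro m hm
  have hdeg := h (show coeff (Finsupp.single i 1 + m) (X i * p) ≠ 0 by rwa [coeff_X_mul])
  rw [map_add, Finsupp.weight_single, Pi.one_apply, smul_eq_mul, mul_one] at hdeg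
  omega

end CommSemiring

section BinaryForm

variable {R : Type*} [CommRing R] {r : MvPolynomial (Fin 2) R} {n : ℕ} {i j : Fin 2}

theorem IsHomogeneous.exists_eq_X_mul_add (hr : r.IsHomogeneous (n + 1)) (hij : i ≠ j) :
    ∃ p : MvPolynomial (Fin 2) R, p.IsHomogeneous n ∧
      r = X j * p + C (coeff (Finsupp.single i (n + 1)) r) * X i ^ (n + 1) := by
  set c := coeff (Finsupp.single i (n + 1)) r
  have hs : (r - C c * X i ^ (n + 1)).IsHomogeneous (n + 1) :=
    hr.sub (isHomogeneous_C_mul_X_pow c i (n + 1))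
  obtain ⟨p, hp⟩ : X j ∣ r - C c * X i ^ (n + 1) := by
    refine X_dvd_of_forall_mem_support fun m hm hmj => ?_
    have hdeg : m.degree = n + 1 := by
      rw [Finsupp.degree_eq_weight_one]; exact hs (mem_support_iff.mp hm)
    rw [Finsupp.eq_single_degree_of_apply_eq_zero hij hmj, hdeg] at hm
    simp [c, coeff_X_pow] at hm
  exact ⟨p, (hp ▸ hs).of_X_mul, by rw [← hp, sub_add_cancel]⟩

theorem IsHomogeneous.aeval_of_apply_eq_zero {S : Type*} [CommRing S] [Algebra R S]
    (hr : r.IsHomogeneous (n + 1)) (hij : i ≠ j) {v : Fin 2 → S} (hv : v j = 0) :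
    MvPolynomial.aeval v r = algebraMap R S (coeff (Finsupp.single i (n + 1)) r) * v i ^ (n + 1) := by
  obtain ⟨p, -, hrp⟩ := hr.exists_eq_X_mul_add hij
  conv_lhs => rw [hrp]
  simp [hv]

end BinaryForm

end MvPolynomial

theorem stmt_12_general (k : Type*) [Field k] (d : ℕ)
    (r : MvPolynomial (Fin 2) k) (hr : r.IsHomogeneous (d + 1))
    (hx : MvPolynomial.coeff (Finsupp.single (0 : Fin 2) (d + 1)) r ≠ 0)
    (hy : MvPolynomial.coeff (Finsupp.single (1 : Fin 2) (d + 1)) r ≠ 0) :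
    ∃ p q : MvPolynomial (Fin 2) k, p.IsHomogeneous d ∧ q.IsHomogeneous d ∧
      (∀ x y : AlgebraicClosure k,
        (MvPolynomial.aeval ![x, y]) p = 0 → (MvPolynomial.aeval ![x, y]) q = 0 →
          x = 0 ∧ y = 0) ∧
      p * X 1 - q * X 0 = r := by
  set c := coeff (Finsupp.single (0 : Fin 2) (d + 1)) r
  obtain ⟨p, hp, hrp⟩ := hr.exists_eq_X_mul_add (i := 0) (j := 1) (by decide)
  refine ⟨p, -(C c * X 0 ^ d), hp, (isHomogeneous_C_mul_X_pow c 0 d).neg, ?_, by rw [hrp]; ring⟩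
  intro x y hpxy hqxy
  have hx0 : x = 0 := by
    simp only [map_neg, map_mul, aeval_C, map_pow, aeval_X, Matrix.cons_val_zero, neg_eq_zero,
      mul_eq_zero, FaithfulSMul.algebraMap_eq_zero_iff, hx, false_or] at hqxy
    exact eq_zero_of_pow_eq_zero hqxy
  subst hx0
  have hr0 : aeval ![0, y] r = 0 := by rw [hrp]; simp [hpxy]
  rw [hr.aeval_of_apply_eq_zero (i := 1) (j := 0) (by decide) rfl] at hr0
  simp only [Matrix.cons_val_one, Matrix.cons_val_zero, mul_eq_zero,
    FaithfulSMul.algebraMap_eq_zero_iff, hy, false_or] at hr0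
  exact ⟨rfl, eq_zero_of_pow_eq_zero hr0⟩

/-- Surjectivity of the fixed-point map: given a nonzero binary form `r` of degree
`d + 1` over `k` whose `x^{d+1}` and `y^{d+1}` coefficients are both nonzero, there
are degree-`d` forms `p, q` with no common nonzero root over the algebraic closure
such that `p·y - q·x = r`. -/
theorem stmt_12 (k : Type*) [Field k] (d : ℕ) (hd : 1 ≤ d)
    (r : MvPolynomial (Fin 2) k) (hr : r.IsHomogeneous (d + 1)) (hr0 : r ≠ 0)
    (hx : MvPolynomial.coeff (Finsupp.single (0 : Fin 2) (d + 1)) r ≠ 0)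
    (hy : MvPolynomial.coeff (Finsupp.single (1 : Fin 2) (d + 1)) r ≠ 0) :
    ∃ p q : MvPolynomial (Fin 2) k, p.IsHomogeneous d ∧ q.IsHomogeneous d ∧
      (∀ x y : AlgebraicClosure k,
        (MvPolynomial.aeval ![x, y]) p = 0 → (MvPolynomial.aeval ![x, y]) q = 0 →
          x = 0 ∧ y = 0) ∧
      p * X 1 - q * X 0 = r :=
  stmt_12_general k d r hr hx hy
end
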